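/- arXiv:2601.15196 — 4 statements merged into one kernel-verified Lean document; each statement's English description precedes it below -/
import Mathlib

section
/- Let h : ℕ → ℝ be a sequence, r ≥ 1 a natural number, and α : ℝ → ℝ a function satisfying α(s) ≤ s for all s ≥ 0. Suppose h(i) ≥ 0 for all i ∈ {0, ..., r-1}, and for every k, h(k) ≥ 0 implies h(k + r) - h(k) + α(h(k)) ≥ 0. Then h(k) ≥ 0 for all k ∈ ℕ. -/
theorem ttcbf_r_step_invariance (h : ℕ → ℝ) (r : ℕ) (hr : 1 ≤ r)
    (α : ℝ → ℝ) (hα : ∀ s : ℝ, 0 ≤ s → α s ≤ s)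
    (hinit : ∀ i < r, 0 ≤ h i)
    (hcbf : ∀ k : ℕ, 0 ≤ h k → h (k + r) - h k + α (h k) ≥ 0) :
    ∀ k : ℕ, 0 ≤ h k := by
  intro k
  induction k using Nat.strong_induction_on with
  | _ k ih =>
    by_cases hk : k < r
    · exact hinit k hk
    · push_neg at hk
      have hkr : k - r < k := Nat.sub_lt (lt_of_lt_of_le hr hk) hr
      have h0 : 0 ≤ h (k - r) := ih _ hkr
      have := hcbf (k - r) h0
      have heq : k - r + r = k := Nat.sub_add_cancel hk
      rw [heq] at this
      have := hα (h (k - r)) h0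
      linarith
end

section
/- Let h : ℝ → ℝ be (r+1)-times continuously differentiable, ΔT > 0, and suppose there exists M ∈ ℝ such that h^{(r+1)}(τ) ≥ M for all τ ∈ (t_k, t_k + ΔT). If Σ_{i=1}^{r} (ΔT)^i / i! · h^{(i)}(t_k) + α(h(t_k)) + (ΔT)^{r+1}/(r+1)! · M ≥ 0, then h(t_k + ΔT) - h(t_k) + α(h(t_k)) ≥ 0. -/
/-!
By Taylor's theorem with the Lagrange remainder, `h (tk + ΔT)` equals the degree-`r` Taylor
polynomial at `tk` plus `h⁽ʳ⁺¹⁾(ξ) ΔT^(r+1)/(r+1)!` for some `ξ ∈ (tk, tk + ΔT)`; as `ΔT > 0`,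
this remainder is at least `ΔT^(r+1)/(r+1)! · M`, and `hcond` is exactly the resulting inequality.
-/

open Set Finset

theorem taylorWithinEval_eq_sum_iteratedDeriv {f : ℝ → ℝ} {n : ℕ} (hf : ContDiff ℝ n f)
    {s : Set ℝ} (hs : UniqueDiffOn ℝ s) {x₀ : ℝ} (hx₀ : x₀ ∈ s) (x : ℝ) :
    taylorWithinEval f n s x₀ x =
      ∑ i ∈ range (n + 1), (x - x₀) ^ i / i.factorial * iteratedDeriv i f x₀ := by
  rw [taylor_within_apply]
  refine sum_congr rfl fun i hi => ?_
  have hin : (i : WithTop ℕ∞) ≤ n := by exact_mod_cast Nat.lt_succ_iff.mp (mem_range.mp hi)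
  rw [iteratedDerivWithin_eq_iteratedDeriv hs ((hf.of_le hin).contDiffAt) hx₀, smul_eq_mul]
  ring

theorem taylor_add_remainder_le_of_le_iteratedDeriv {f : ℝ → ℝ} {n : ℕ} (hf : ContDiff ℝ (n + 1) f)
    {a b M : ℝ} (hab : a < b) (hM : ∀ τ ∈ Ioo a b, M ≤ iteratedDeriv (n + 1) f τ) :
    ∑ i ∈ range (n + 1), (b - a) ^ i / i.factorial * iteratedDeriv i f a
      + (b - a) ^ (n + 1) / (n + 1).factorial * M ≤ f b := by
  obtain ⟨ξ, hξ, hrem⟩ := taylor_mean_remainder_lagrange_iteratedDeriv hab.ne hf.contDiffOn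
  rw [uIoo_of_le hab.le] at hξ
  rw [taylorWithinEval_eq_sum_iteratedDeriv hf.of_succ (uniqueDiffOn_uIcc hab.ne)
    left_mem_uIcc] at hrem
  have hbound : (b - a) ^ (n + 1) / (n + 1).factorial * M
      ≤ iteratedDeriv (n + 1) f ξ * (b - a) ^ (n + 1) / (n + 1).factorial := by
    rw [mul_comm, mul_div_assoc]
    exact mul_le_mul_of_nonneg_right (hM ξ hξ) (by have := sub_pos.2 hab; positivity)
  linarith

theorem ttcbf_worst_case_remainder (h : ℝ → ℝ) (r : ℕ)
    (hsmooth : ContDiff ℝ (r + 1) h) (tk ΔT M : ℝ) (hΔT : 0 < ΔT)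
    (α : ℝ → ℝ)
    (hM : ∀ τ ∈ Set.Ioo tk (tk + ΔT), M ≤ iteratedDeriv (r + 1) h τ)
    (hcond : (∑ i ∈ Finset.Icc 1 r, ΔT ^ i / (Nat.factorial i) * iteratedDeriv i h tk)
        + α (h tk) + ΔT ^ (r + 1) / (Nat.factorial (r + 1)) * M ≥ 0) :
    h (tk + ΔT) - h tk + α (h tk) ≥ 0 := by
  have htaylor := taylor_add_remainder_le_of_le_iteratedDeriv hsmooth (lt_add_of_pos_right tk hΔT) hM
  rw [add_sub_cancel_left, sum_range_eq_add_Ico _ (Nat.add_one_pos r),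
    Finset.Ico_add_one_right_eq_Icc] at htaylor
  simp only [pow_zero, Nat.factorial_zero, Nat.cast_one, div_one, one_mul,
    iteratedDeriv_zero] at htaylor
  linarith
end

section
/- Let h : ℕ → ℝ, r ≥ 1, α̂ : ℝ → ℝ with α̂(s) ≤ s for s ≥ 0, and η : ℕ → ℝ with η(k) ∈ [0,1] for all k. Suppose h(i) ≥ 0 for i ∈ {0,...,r-1}, and for every k with h(k) ≥ 0, h(k+r) - h(k) + η(k)·α̂(h(k)) ≥ 0. Then h(k) ≥ 0 for all k. -/
theorem attcbf_forward_invariance (h : ℕ → ℝ) (r : ℕ) (hr : 1 ≤ r)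
    (αhat : ℝ → ℝ) (hα : ∀ s : ℝ, 0 ≤ s → αhat s ≤ s)
    (η : ℕ → ℝ) (hη : ∀ k, η k ∈ Set.Icc (0 : ℝ) 1)
    (hinit : ∀ i < r, 0 ≤ h i)
    (hcbf : ∀ k : ℕ, 0 ≤ h k → h (k + r) - h k + η k * αhat (h k) ≥ 0) :
    ∀ k : ℕ, 0 ≤ h k := by
  intro k
  induction k using Nat.strong_induction_on with
  | _ k ih =>
    by_cases hk : k < r
    · exact hinit k hk
    · push_neg at hk
      have hm : 0 ≤ h (k - r) := ih (k - r) (by omega)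
      have hc := hcbf (k - r) hm
      have hkr : k - r + r = k := by omega
      rw [hkr] at hc
      have h1 : η (k - r) * αhat (h (k - r)) ≤ η (k - r) * h (k - r) :=
        mul_le_mul_of_nonneg_left (hα _ hm) (hη (k - r)).1
      have h2 : η (k - r) * h (k - r) ≤ 1 * h (k - r) :=
        mul_le_mul_of_nonneg_right (hη (k - r)).2 hm
      nlinarith
end

section
/- Let h : ℝ → ℝ be twice continuously differentiable, Δt > 0, r = 1, ΔT = Δt, and suppose α : ℝ → ℝ satisfies α(s) ≤ s for s ≥ 0. If for every k ∈ ℕ with h(k·Δt) ≥ 0 we have Δt·h'(k·Δt) + α(h(k·Δt)) + (Δt)²/2 · inf_{τ ∈ (kΔt,(k+1)Δt)} h''(τ) ≥ 0 (with the infimum finite), and h(0) ≥ 0, then h(k·Δt) ≥ 0 for all k ∈ ℕ. -/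
/-! By Taylor's theorem with Lagrange remainder on `[kΔt, (k+1)Δt]`,
`h((k+1)Δt) ≥ h(kΔt) + Δt·h'(kΔt) + Δt²/2 · inf h''`, and since `α(h(kΔt)) ≤ h(kΔt)` when
`h(kΔt) ≥ 0`, the sampled-data condition makes the right-hand side nonnegative; induct on `k`. -/

open Set

theorem taylor_mean_remainder_lagrange_two {f : ℝ → ℝ} (hf : ContDiff ℝ 2 f) {a b : ℝ}
    (hab : a < b) :
    ∃ τ ∈ Ioo a b, f b = f a + deriv f a * (b - a) + iteratedDeriv 2 f τ * (b - a) ^ 2 / 2 := by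
  obtain ⟨τ, hτ, hrem⟩ :=
    taylor_mean_remainder_lagrange_iteratedDeriv (n := 1) hab.ne hf.contDiffOn
  rw [uIoo_of_le hab.le] at hτ
  have hderiv : iteratedDerivWithin 1 f (uIcc a b) a = deriv f a := by
    rw [iteratedDerivWithin_one, uIcc_of_le hab.le]
    exact ((hf.differentiable two_ne_zero).differentiableAt).derivWithin
      (uniqueDiffOn_Icc hab a (left_mem_Icc.mpr hab.le))
  have htaylor : taylorWithinEval f 1 (uIcc a b) a b = f a + deriv f a * (b - a) := by
    simp [taylorWithinEval_succ, taylor_within_zero_eval, hderiv, mul_comm]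
  refine ⟨τ, hτ, ?_⟩
  rw [htaylor] at hrem
  norm_num at hrem
  linarith

theorem add_deriv_mul_add_sInf_iteratedDeriv_two_le {f : ℝ → ℝ} (hf : ContDiff ℝ 2 f) {a b : ℝ}
    (hab : a < b) (hbdd : BddBelow (iteratedDeriv 2 f '' Ioo a b)) :
    f a + deriv f a * (b - a) + (b - a) ^ 2 / 2 * sInf (iteratedDeriv 2 f '' Ioo a b) ≤ f b := by
  obtain ⟨τ, hτ, hfb⟩ := taylor_mean_remainder_lagrange_two hf hab
  have hinf : sInf (iteratedDeriv 2 f '' Ioo a b) ≤ iteratedDeriv 2 f τ :=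
    csInf_le hbdd (mem_image_of_mem _ hτ)
  rw [hfb]
  nlinarith [sq_nonneg (b - a)]

theorem ttcbf_relative_degree_one (h : ℝ → ℝ) (hsmooth : ContDiff ℝ 2 h)
    (Δt : ℝ) (hΔt : 0 < Δt) (α : ℝ → ℝ) (hα : ∀ s : ℝ, 0 ≤ s → α s ≤ s)
    (hbdd : ∀ k : ℕ, BddBelow (iteratedDeriv 2 h '' Set.Ioo ((k : ℝ) * Δt) (((k : ℝ) + 1) * Δt)))
    (hcond : ∀ k : ℕ, 0 ≤ h ((k : ℝ) * Δt) →
      Δt * deriv h ((k : ℝ) * Δt) + α (h ((k : ℝ) * Δt))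
        + Δt ^ 2 / 2 * sInf (iteratedDeriv 2 h '' Set.Ioo ((k : ℝ) * Δt) (((k : ℝ) + 1) * Δt)) ≥ 0)
    (hinit : 0 ≤ h 0) :
    ∀ k : ℕ, 0 ≤ h ((k : ℝ) * Δt) := by
  intro k
  induction k with
  | zero => simpa using hinit
  | succ k ih =>
    have hstep : (k : ℝ) * Δt < ((k : ℝ) + 1) * Δt := by nlinarith
    have hlower := add_deriv_mul_add_sInf_iteratedDeriv_two_le hsmooth hstep (hbdd k)
    have hwidth : ((k : ℝ) + 1) * Δt - (k : ℝ) * Δt = Δt := by ring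
    rw [hwidth] at hlower
    push_cast
    linarith [hcond k ih, hα _ ih]
end
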